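/- The set of almost quantum distributions is closed under coarse-graining of outcomes: if P is almost quantum with outcomes in {0,...,d−1} and one party k merges two distinct outcomes a ≠ a' of some input x_k into a single outcome, the resulting distribution is almost quantum. -/

import Mathlib

/-!
The projections of a single measurement in an almost quantum representation are symmetric
idempotents summing to the identity, hence pairwise orthogonal; so summing them over the fibres
of any relabelling of the outcomes gives again such a family. The ordered products `seqApply`
are additive in each factor, so replacing one factor by a merged projection splits every product
into the sum over the merged outcomes. This yields both the permutation invariance on `φ` and the
coarse-grained probabilities.
-/

/-- Ordered product of operators applied to a vector. -/
def seqApply {H : Type*} [AddCommMonoid H] [Module ℂ H] {n : ℕ}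
    (T : Fin n → (H →ₗ[ℂ] H)) (v : H) : H :=
  (List.ofFn T).foldr (fun f w => f w) v

/-- An almost quantum representation of an `n`-partite distribution `P`. -/
structure AQRep {n : ℕ} {A X : Type*} [Fintype A]
    (P : (Fin n → A) → (Fin n → X) → ℝ) where
  H : Type
  [instN : NormedAddCommGroup H]
  [instI : InnerProductSpace ℂ H]
  φ : H
  E : Fin n → A → X → (H →ₗ[ℂ] H)
  norm_φ : ‖φ‖ = 1
  idem : ∀ k a x, E k a x ∘ₗ E k a x = E k a x
  selfAdj : ∀ k a x (v w : H), (inner ℂ ((E k a x) v) w : ℂ) = inner ℂ v ((E k a x) w)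
  complete : ∀ k x, ∑ a, E k a x = (LinearMap.id : H →ₗ[ℂ] H)
  perm : ∀ (a : Fin n → A) (x : Fin n → X) (π : Equiv.Perm (Fin n)),
    seqApply (fun i => E (π i) (a (π i)) (x (π i))) φ = seqApply (fun i => E i (a i) (x i)) φ
  prob : ∀ a x, (P a x : ℂ) = inner ℂ φ (seqApply (fun i => E i (a i) (x i)) φ)

/-- `P` is almost quantum iff it admits an almost quantum representation. -/
def IsAlmostQuantum {n : ℕ} {A X : Type*} [Fintype A]
    (P : (Fin n → A) → (Fin n → X) → ℝ) : Prop :=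
  Nonempty (AQRep P)

open Finset Function

section SeqApply

variable {H : Type*} [AddCommMonoid H] [Module ℂ H]

lemma seqApply_succ {n : ℕ} (T : Fin (n + 1) → (H →ₗ[ℂ] H)) (v : H) :
    seqApply T v = T 0 (seqApply (fun i => T i.succ) v) := by
  simp [seqApply, List.ofFn_succ]

lemma exists_seqApply_update_eq {n : ℕ} (T : Fin n → (H →ₗ[ℂ] H)) (j : Fin n) (v : H) :
    ∃ (L : H →ₗ[ℂ] H) (w : H), ∀ S, seqApply (update T j S) v = L (S w) := by
  induction n with
  | zero => exact j.elim0
  | succ n ih =>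
    cases j using Fin.cases with
    | zero =>
      refine ⟨LinearMap.id, seqApply (fun i => T i.succ) v, fun S => ?_⟩
      simp [seqApply_succ]
    | succ j =>
      obtain ⟨L, w, hL⟩ := ih (fun i => T i.succ) j
      refine ⟨T 0 ∘ₗ L, w, fun S => ?_⟩
      rw [seqApply_succ, update_of_ne (Fin.succ_ne_zero j).symm]
      change T 0 (seqApply (update T j.succ S ∘ Fin.succ) v) = T 0 (L (S w))
      rw [update_comp_eq_of_injective _ (Fin.succ_injective n)]
      exact congrArg (T 0) (hL S)

lemma seqApply_update_sum {n : ℕ} {ι : Type*} (T : Fin n → (H →ₗ[ℂ] H)) (j : Fin n)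
    (s : Finset ι) (S : ι → (H →ₗ[ℂ] H)) (v : H) :
    seqApply (update T j (∑ i ∈ s, S i)) v =
      ∑ i ∈ s, seqApply (update T j (S i)) v := by
  obtain ⟨L, w, hL⟩ := exists_seqApply_update_eq T j v
  simp only [hL, LinearMap.sum_apply, map_sum]

end SeqApply

section PVM

variable {H A : Type*} [NormedAddCommGroup H] [InnerProductSpace ℂ H] [Fintype A]

structure IsPVM (M : A → (H →ₗ[ℂ] H)) : Prop where
  isSymmetricProjection : ∀ a, (M a).IsSymmetricProjection
  sum_eq_one : ∑ a, M a = 1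

namespace IsPVM

variable {M : A → (H →ₗ[ℂ] H)}

lemma apply_apply (hM : IsPVM M) (a : A) (v : H) : M a (M a v) = M a v :=
  LinearMap.congr_fun (hM.isSymmetricProjection a).isIdempotentElem v

lemma norm_sq_eq_sum (hM : IsPVM M) (w : H) : ‖w‖ ^ 2 = ∑ a, ‖M a w‖ ^ 2 := by
  have hw : ∑ a, M a w = w := by
    rw [← LinearMap.sum_apply, hM.sum_eq_one, Module.End.one_apply]
  calc ‖w‖ ^ 2 = RCLike.re (inner ℂ w w) := (inner_self_eq_norm_sq w).symm
    _ = ∑ a, RCLike.re (inner ℂ (M a w) (M a w)) := by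
      nth_rewrite 2 [← hw]
      rw [inner_sum, map_sum]
      refine sum_congr rfl fun a _ => ?_
      rw [(hM.isSymmetricProjection a).isSymmetric, hM.apply_apply]
    _ = ∑ a, ‖M a w‖ ^ 2 := by simp only [inner_self_eq_norm_sq]

lemma orthogonalIdempotents [DecidableEq A] (hM : IsPVM M) : OrthogonalIdempotents M := by
  refine ⟨fun a => (hM.isSymmetricProjection a).isIdempotentElem, fun a b hab => ?_⟩
  ext v
  set w := M b v
  have hbw : M b w = w := hM.apply_apply b v
  have hrest : ∑ c ∈ univ.erase b, ‖M c w‖ ^ 2 = 0 := by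
    have := hM.norm_sq_eq_sum w
    rw [← add_sum_erase _ _ (mem_univ b), hbw] at this
    linarith
  have ha : ‖M a w‖ ^ 2 = 0 :=
    (sum_eq_zero_iff_of_nonneg fun _ _ => by positivity).mp hrest a
      (mem_erase.mpr ⟨hab, mem_univ a⟩)
  simpa using ha

lemma sum_fiber {B : Type*} [Fintype B] [DecidableEq A] [DecidableEq B] (hM : IsPVM M)
    (f : A → B) : IsPVM (fun b => ∑ a with f a = b, M a) where
  isSymmetricProjection b :=
    ⟨hM.orthogonalIdempotents.isIdempotentElem_sum,
      LinearMap.isSymmetric_sum _ fun a _ => (hM.isSymmetricProjection a).isSymmetric⟩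
  sum_eq_one := by rw [sum_fiberwise, hM.sum_eq_one]

end IsPVM

end PVM

attribute [instance] AQRep.instN AQRep.instI

lemma AQRep.isPVM {n : ℕ} {A X : Type*} [Fintype A] {P : (Fin n → A) → (Fin n → X) → ℝ}
    (R : AQRep P) (k : Fin n) (x : X) : IsPVM (fun a => R.E k a x) :=
  ⟨fun a => ⟨R.idem k a x, R.selfAdj k a x⟩, R.complete k x⟩

section CoarseGraining

variable {n : ℕ} {A X : Type*} [Fintype A] [DecidableEq A] [DecidableEq X]

def coarseGrainFamily {M : Type*} [AddCommMonoid M] (E : Fin n → A → X → M) (k : Fin n)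
    (x₀ : X) (f : A → A) : Fin n → A → X → M :=
  fun i b x => if i = k ∧ x = x₀ then ∑ c with f c = b, E i c x else E i b x

lemma coarseGrainFamily_slots {M : Type*} [AddCommMonoid M] (E : Fin n → A → X → M)
    (k : Fin n) (x₀ : X) (f : A → A) (a : Fin n → A) (x : Fin n → X) :
    (fun i => coarseGrainFamily E k x₀ f i (a i) (x i)) =
      if x k = x₀ then update (fun i => E i (a i) (x i)) k (∑ c with f c = a k, E k c x₀)
      else fun i => E i (a i) (x i) := by
  funext i
  rcases eq_or_ne i k with rfl | hi
  · by_cases hx : x i = x₀ <;> simp [coarseGrainFamily, hx]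
  · split_ifs <;> simp [coarseGrainFamily, hi]

lemma isPVM_coarseGrainFamily {H : Type*} [NormedAddCommGroup H] [InnerProductSpace ℂ H]
    {E : Fin n → A → X → (H →ₗ[ℂ] H)} (hE : ∀ i x, IsPVM (fun a => E i a x)) (k : Fin n)
    (x₀ : X) (f : A → A) (i : Fin n) (x : X) :
    IsPVM (fun b => coarseGrainFamily E k x₀ f i b x) := by
  by_cases h : i = k ∧ x = x₀
  · simpa only [coarseGrainFamily, if_pos h] using (hE i x).sum_fiber f
  · simpa only [coarseGrainFamily, if_neg h] using hE i x

lemma seqApply_coarseGrainFamily {H : Type*} [AddCommMonoid H] [Module ℂ H]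
    (E : Fin n → A → X → (H →ₗ[ℂ] H)) (k : Fin n) (x₀ : X) (f : A → A)
    (π : Equiv.Perm (Fin n)) (a : Fin n → A) (x : Fin n → X) (v : H) :
    seqApply (fun i => coarseGrainFamily E k x₀ f (π i) (a (π i)) (x (π i))) v =
      if x k = x₀ then
        ∑ c with f c = a k, seqApply (fun i => E (π i) (update a k c (π i)) (x (π i))) v
      else seqApply (fun i => E (π i) (a (π i)) (x (π i))) v := by
  change seqApply ((fun i => coarseGrainFamily E k x₀ f i (a i) (x i)) ∘ π) v = _
  rw [coarseGrainFamily_slots]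
  split_ifs with hx
  · rw [update_comp_equiv, seqApply_update_sum]
    refine sum_congr rfl fun c _ => ?_
    have hslots : (fun i => E i (update a k c i) (x i)) =
        update (fun i => E i (a i) (x i)) k (E k c x₀) := by
      funext i
      rcases eq_or_ne i k with rfl | hi <;> simp [*]
    rw [← update_comp_equiv, ← hslots]
    rfl
  · rfl

def coarseGrainOutcomes (P : (Fin n → A) → (Fin n → X) → ℝ) (k : Fin n) (x₀ : X)
    (f : A → A) : (Fin n → A) → (Fin n → X) → ℝ :=
  fun a x => if x k = x₀ then ∑ c with f c = a k, P (update a k c) x else P a x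

def AQRep.coarseGrainOutcomes {P : (Fin n → A) → (Fin n → X) → ℝ} (R : AQRep P) (k : Fin n)
    (x₀ : X) (f : A → A) : AQRep (coarseGrainOutcomes P k x₀ f) :=
  have hPVM := isPVM_coarseGrainFamily R.isPVM k x₀ f
  have hseq := seqApply_coarseGrainFamily R.E k x₀ f
  have hseq₁ : ∀ (a : Fin n → A) (x : Fin n → X),
      seqApply (fun i => coarseGrainFamily R.E k x₀ f i (a i) (x i)) R.φ =
        if x k = x₀ then
          ∑ c with f c = a k, seqApply (fun i => R.E i (update a k c i) (x i)) R.φ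
        else seqApply (fun i => R.E i (a i) (x i)) R.φ :=
    fun a x => hseq 1 a x R.φ
  { H := R.H
    φ := R.φ
    E := coarseGrainFamily R.E k x₀ f
    norm_φ := R.norm_φ
    idem := fun i b x => ((hPVM i x).isSymmetricProjection b).isIdempotentElem
    selfAdj := fun i b x => ((hPVM i x).isSymmetricProjection b).isSymmetric
    complete := fun i x => (hPVM i x).sum_eq_one
    perm := fun a x π => by
      rw [hseq π, hseq₁]
      split_ifs
      · exact sum_congr rfl fun c _ => R.perm _ x π
      · exact R.perm a x π
    prob := fun a x => by
      rw [hseq₁, _root_.coarseGrainOutcomes]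
      split_ifs
      · push_cast
        rw [inner_sum]
        exact sum_congr rfl fun c _ => R.prob _ x
      · exact R.prob a x }

theorem IsAlmostQuantum.coarseGrainOutcomes {P : (Fin n → A) → (Fin n → X) → ℝ}
    (hP : IsAlmostQuantum P) (k : Fin n) (x₀ : X) (f : A → A) :
    IsAlmostQuantum (coarseGrainOutcomes P k x₀ f) :=
  let ⟨R⟩ := hP
  ⟨R.coarseGrainOutcomes k x₀ f⟩

end CoarseGraining

lemma sum_filter_update_id_eq {A M : Type*} [Fintype A] [DecidableEq A] [AddCommMonoid M]
    {a₀ a₁ : A} (hne : a₀ ≠ a₁) (g : A → M) (b : A) :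
    ∑ c with update id a₁ a₀ c = b, g c =
      if b = a₀ then g a₀ + g a₁ else if b = a₁ then 0 else g b := by
  have hfiber : ({c | update id a₁ a₀ c = b} : Finset A) =
      if b = a₀ then {a₀, a₁} else if b = a₁ then ∅ else {b} := by
    ext c
    rcases eq_or_ne c a₁ with rfl | hc <;> split_ifs <;> simp_all [eq_comm]
  rw [hfiber]
  split_ifs <;> simp [sum_pair hne]

/-- the almost quantum set is closed under coarse-graining of outcomes.  If
party `k` merges the two distinct outcomes `a₀ ≠ a₁` of input `x₀` into the single
outcome `a₀` (so that the merged outcome collects both probabilities and `a₁` becomes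
an outcome of probability zero for that input), the resulting distribution is almost
quantum. -/
theorem almostQuantum_closed_coarseGraining
    {n : ℕ} {A X : Type*} [Fintype A] [DecidableEq A] [DecidableEq X]
    (P : (Fin n → A) → (Fin n → X) → ℝ)
    (hP : IsAlmostQuantum P)
    (k : Fin n) (x₀ : X) (a₀ a₁ : A) (hne : a₀ ≠ a₁) :
    IsAlmostQuantum (fun (a : Fin n → A) (x : Fin n → X) =>
      if x k = x₀ ∧ a k = a₀ then P a x + P (Function.update a k a₁) x
      else if x k = x₀ ∧ a k = a₁ then 0
      else P a x) := by
  convert hP.coarseGrainOutcomes k x₀ (update id a₁ a₀) using 1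
  funext a x
  by_cases hx : x k = x₀
  · rw [coarseGrainOutcomes, if_pos hx, sum_filter_update_id_eq hne, update_eq_self]
    simp only [hx, true_and]
    split_ifs with h₀ h₁
    · rw [← h₀, update_eq_self]
    · rfl
    · rfl
  · simp [coarseGrainOutcomes, hx]
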